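/- Mixed exponential-trigonometric identities: for x, y ∈ ℂ and nonzero u, v ∈ ℂ, assuming the series defining exp_{s,t}(x,u), exp_{s,t}(iy,v) and exp_{s,t}(y,−v) converge absolutely: (1) Σ_{n=0}^{∞} (x ⊕_{u,v} iy)^{(n)}/{n}_{s,t}! = exp_{s,t}(x,u)·(cos_{s,t}(y,v) + i·sin_{s,t}(y,v)); (2) Σ_{n=0}^{∞} (x ⊕_{u,−v} y)^{(n)}/{n}_{s,t}! = exp_{s,t}(x,u)·(cos_{s,t}(y,v) + sin_{s,t}(y,v)). -/

import Mathlib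

open scoped BigOperators

noncomputable section

/-- The Lucas sequence `{n}_{s,t}`. -/
def lucasSeq (s t : ℂ) : ℕ → ℂ
  | 0 => 0
  | 1 => 1
  | n + 2 => s * lucasSeq s t (n + 1) + t * lucasSeq s t n

/-- The Lucastorial `{n}_{s,t}!`. -/
def lucasFact (s t : ℂ) : ℕ → ℂ
  | 0 => 1
  | n + 1 => lucasFact s t n * lucasSeq s t (n + 1)

/-- The Lucasnomial coefficient `{n choose k}_{s,t}`. -/
def lucasBinom (s t : ℂ) (n k : ℕ) : ℂ :=
  lucasFact s t n / (lucasFact s t k * lucasFact s t (n - k))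

/-- The `(u,v)`-deformed Lucasnomial power `(x ⊕_{u,v} y)^{(n)}`. -/
def lucasPow (s t u v x y : ℂ) (n : ℕ) : ℂ :=
  ∑ k ∈ Finset.range (n + 1),
    lucasBinom s t n k * u ^ ((n - k).choose 2) * v ^ (k.choose 2) * x ^ (n - k) * y ^ k

/-- The Lucas-derivative with respect to the roots `p = φ`, `q = φ'`. -/
def lucasDeriv (p q : ℂ) (f : ℂ → ℂ) (x : ℂ) : ℂ :=
  (f (p * x) - f (q * x)) / ((p - q) * x)

/-- The Lucas-derivative, extended by `0` at `0`, as an operator suitable for iteration. -/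
def lucasDeriv0 (p q : ℂ) (f : ℂ → ℂ) : ℂ → ℂ :=
  fun x => if x = 0 then 0 else (f (p * x) - f (q * x)) / ((p - q) * x)

/-- The Lucas-Pantograph exponential `exp_{s,t}(z,u)`. -/
def lucasExp (s t u z : ℂ) : ℂ :=
  ∑' n : ℕ, u ^ (n.choose 2) * z ^ n / lucasFact s t n

/-- The Lucas-Pantograph sine `sin_{s,t}(z,u)`. -/
def lucasSin (s t u z : ℂ) : ℂ :=
  ∑' n : ℕ, (-1 : ℂ) ^ n * u ^ ((2 * n + 1).choose 2) * z ^ (2 * n + 1) / lucasFact s t (2 * n + 1)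

/-- The Lucas-Pantograph cosine `cos_{s,t}(z,u)`. -/
def lucasCos (s t u z : ℂ) : ℂ :=
  ∑' n : ℕ, (-1 : ℂ) ^ n * u ^ ((2 * n).choose 2) * z ^ (2 * n) / lucasFact s t (2 * n)

/-!
Divided by `{n}_{s,t}!`, the deformed power `(x ⊕_{u,w} z)^{(n)}` is the `n`-th term of the
Cauchy product of the series of `exp_{s,t}(z,w)` and `exp_{s,t}(x,u)`, so under absolute
convergence its series sums to `exp_{s,t}(x,u) · exp_{s,t}(z,w)`. It remains to split
`exp_{s,t}(iy,v)` and `exp_{s,t}(y,-v)` into even and odd terms: since `C(2k,2)` and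
`C(2k+1,2)` both have the parity of `k`, the signs `i^n` resp. `(-1)^{C(n,2)}` turn these halves
into `cos_{s,t}(y,v)` and `i·sin_{s,t}(y,v)` resp. `sin_{s,t}(y,v)`.
-/

section

variable {s t : ℂ}

theorem lucasFact_ne_zero (hL : ∀ n : ℕ, 1 ≤ n → lucasSeq s t n ≠ 0) (n : ℕ) :
    lucasFact s t n ≠ 0 := by
  induction n with
  | zero => exact one_ne_zero
  | succ k ih => exact mul_ne_zero ih (hL (k + 1) k.succ_pos)

theorem lucasPow_div_lucasFact (hL : ∀ n : ℕ, 1 ≤ n → lucasSeq s t n ≠ 0) (u w x z : ℂ) (n : ℕ) :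
    lucasPow s t u w x z n / lucasFact s t n =
      ∑ k ∈ Finset.range (n + 1), w ^ (k.choose 2) * z ^ k / lucasFact s t k *
        (u ^ ((n - k).choose 2) * x ^ (n - k) / lucasFact s t (n - k)) := by
  rw [lucasPow, Finset.sum_div]
  refine Finset.sum_congr rfl fun k _ => ?_
  have hfact := lucasFact_ne_zero hL
  rw [lucasBinom]
  field_simp [hfact n, hfact k, hfact (n - k)]

theorem hasSum_lucasPow_div_lucasFact (hL : ∀ n : ℕ, 1 ≤ n → lucasSeq s t n ≠ 0) {u w x z : ℂ}
    (hx : Summable fun n : ℕ => ‖u ^ (n.choose 2) * x ^ n / lucasFact s t n‖)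
    (hz : Summable fun n : ℕ => ‖w ^ (n.choose 2) * z ^ n / lucasFact s t n‖) :
    HasSum (fun n : ℕ => lucasPow s t u w x z n / lucasFact s t n)
      (lucasExp s t u x * lucasExp s t w z) := by
  simp_rw [lucasPow_div_lucasFact hL, mul_comm (lucasExp s t u x)]
  exact hasSum_sum_range_mul_of_summable_norm
    (f := fun n => w ^ (n.choose 2) * z ^ n / lucasFact s t n)
    (g := fun n => u ^ (n.choose 2) * x ^ n / lucasFact s t n) hz hx

theorem tsum_eq_tsum_even_add_tsum_odd {G : Type*} [AddCommGroup G] [UniformSpace G]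
    [IsUniformAddGroup G] [CompleteSpace G] [T2Space G] {f : ℕ → G} (hf : Summable f) :
    ∑' n, f n = ∑' k, f (2 * k) + ∑' k, f (2 * k + 1) :=
  (tsum_even_add_odd (hf.comp_injective fun _ _ h => by omega)
    (hf.comp_injective fun _ _ h => by omega)).symm

theorem neg_one_pow_two_mul_choose_two {R : Type*} [Monoid R] [HasDistribNeg R] (k : ℕ) :
    (-1 : R) ^ ((2 * k).choose 2) = (-1) ^ k := by
  induction k with
  | zero => rfl
  | succ k ih =>
    have hchoose : (2 * (k + 1)).choose 2 = (2 * k).choose 2 + 2 * (2 * k) + 1 := by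
      rw [show 2 * (k + 1) = 2 * k + 1 + 1 by ring, Nat.choose_succ_succ' (2 * k + 1) 1,
        Nat.choose_succ_succ' (2 * k) 1, Nat.choose_one_right, Nat.choose_one_right]
      ring
    rw [hchoose, pow_succ, pow_add, pow_mul, ih, neg_one_sq, one_pow, mul_one, pow_succ]

theorem neg_one_pow_two_mul_add_one_choose_two {R : Type*} [Monoid R] [HasDistribNeg R] (k : ℕ) :
    (-1 : R) ^ ((2 * k + 1).choose 2) = (-1) ^ k := by
  rw [Nat.choose_succ_succ', Nat.choose_one_right, pow_add, pow_mul, neg_one_sq, one_pow,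
    one_mul, neg_one_pow_two_mul_choose_two]

theorem lucasExp_I_mul {v y : ℂ}
    (h : Summable fun n : ℕ => v ^ (n.choose 2) * (Complex.I * y) ^ n / lucasFact s t n) :
    lucasExp s t v (Complex.I * y) = lucasCos s t v y + Complex.I * lucasSin s t v y := by
  rw [lucasExp, tsum_eq_tsum_even_add_tsum_odd h, lucasCos, lucasSin, ← tsum_mul_left]
  congr 1 <;> refine tsum_congr fun k => ?_
  · rw [mul_pow, pow_mul Complex.I, Complex.I_sq]
    ring
  · rw [mul_pow, pow_succ Complex.I, pow_mul Complex.I, Complex.I_sq]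
    ring

theorem lucasExp_neg {v y : ℂ}
    (h : Summable fun n : ℕ => (-v) ^ (n.choose 2) * y ^ n / lucasFact s t n) :
    lucasExp s t (-v) y = lucasCos s t v y + lucasSin s t v y := by
  rw [lucasExp, tsum_eq_tsum_even_add_tsum_odd h, lucasCos, lucasSin]
  simp only [neg_pow v, neg_one_pow_two_mul_choose_two, neg_one_pow_two_mul_add_one_choose_two]

end

theorem lucasExp_mixed_trig_general (s t : ℂ)
    (hL : ∀ n : ℕ, 1 ≤ n → lucasSeq s t n ≠ 0)
    (x y u v : ℂ)
    (hconvx : Summable fun n : ℕ => ‖u ^ (n.choose 2) * x ^ n / lucasFact s t n‖)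
    (hconviy : Summable fun n : ℕ =>
      ‖v ^ (n.choose 2) * (Complex.I * y) ^ n / lucasFact s t n‖)
    (hconvny : Summable fun n : ℕ =>
      ‖(-v) ^ (n.choose 2) * y ^ n / lucasFact s t n‖) :
    HasSum (fun n : ℕ => lucasPow s t u v x (Complex.I * y) n / lucasFact s t n)
      (lucasExp s t u x * (lucasCos s t v y + Complex.I * lucasSin s t v y)) ∧
    HasSum (fun n : ℕ => lucasPow s t u (-v) x y n / lucasFact s t n)
      (lucasExp s t u x * (lucasCos s t v y + lucasSin s t v y)) := by
  rw [← lucasExp_I_mul hconviy.of_norm, ← lucasExp_neg hconvny.of_norm]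
  exact ⟨hasSum_lucasPow_div_lucasFact hL hconvx hconviy,
    hasSum_lucasPow_div_lucasFact hL hconvx hconvny⟩

/-- Mixed exponential-trigonometric identities. -/
theorem lucasExp_mixed_trig (s t : ℂ) (hs : s ≠ 0) (ht : t ≠ 0)
    (hL : ∀ n : ℕ, 1 ≤ n → lucasSeq s t n ≠ 0)
    (x y u v : ℂ) (hu : u ≠ 0) (hv : v ≠ 0)
    (hconvx : Summable fun n : ℕ => ‖u ^ (n.choose 2) * x ^ n / lucasFact s t n‖)
    (hconviy : Summable fun n : ℕ =>
      ‖v ^ (n.choose 2) * (Complex.I * y) ^ n / lucasFact s t n‖)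
    (hconvny : Summable fun n : ℕ =>
      ‖(-v) ^ (n.choose 2) * y ^ n / lucasFact s t n‖) :
    HasSum (fun n : ℕ => lucasPow s t u v x (Complex.I * y) n / lucasFact s t n)
      (lucasExp s t u x * (lucasCos s t v y + Complex.I * lucasSin s t v y)) ∧
    HasSum (fun n : ℕ => lucasPow s t u (-v) x y n / lucasFact s t n)
      (lucasExp s t u x * (lucasCos s t v y + lucasSin s t v y)) :=
  lucasExp_mixed_trig_general s t hL x y u v hconvx hconviy hconvny
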